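/- Let B = (b_{ij}) be a constant real skew-symmetric 3×3 matrix (b₂₁ = −b₁₂, b₃₁ = −b₁₃, b₃₂ = −b₂₃) with b₁₂ b₁₃ b₂₃ ≠ 0, and let g : ℝ → ℝ be differentiable. Define the symmetric traceless matrix A(t) by a₁₁ = g(t)(b₁₂² + b₁₃² − 2b₂₃²)/(3 b₁₂ b₁₃ b₂₃), a₂₂ = g(t)(b₁₂² − 2b₁₃² + b₂₃²)/(3 b₁₂ b₁₃ b₂₃), a₃₃ = −a₁₁ − a₂₂, a₁₂ = a₂₁ = g(t)/b₁₂, a₁₃ = a₃₁ = −g(t)/b₁₃, a₂₃ = a₃₂ = g(t)/b₂₃. Then v(t,x) = A(t)x, H(t,x) = Bx and p(t,x) = −(ρ/2)⟨x, (A′(t)+A(t)²)x⟩ + ρ μ₀ |Bx|² solve the MHD equations on ℝ × ℝ³. (Proposition 2.2.) -/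

import Mathlib

open Real Matrix

/-- Partial derivative in the `i`-th spatial coordinate. -/
noncomputable def pd (i : Fin 3) (f : (Fin 3 → ℝ) → ℝ) (x : Fin 3 → ℝ) : ℝ :=
  deriv (fun s => f (Function.update x i s)) (x i)

/-- Divergence of a vector field on `ℝ³`. -/
noncomputable def vdiv (F : (Fin 3 → ℝ) → (Fin 3 → ℝ)) (x : Fin 3 → ℝ) : ℝ :=
  ∑ i, pd i (fun y => F y i) x

/-- Curl of a vector field on `ℝ³`. -/
noncomputable def vcurl (F : (Fin 3 → ℝ) → (Fin 3 → ℝ)) (x : Fin 3 → ℝ) : Fin 3 → ℝ :=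
  ![pd 1 (fun y => F y 2) x - pd 2 (fun y => F y 1) x,
    pd 2 (fun y => F y 0) x - pd 0 (fun y => F y 2) x,
    pd 0 (fun y => F y 1) x - pd 1 (fun y => F y 0) x]

/-- Laplacian of a scalar field on `ℝ³`. -/
noncomputable def slap (f : (Fin 3 → ℝ) → ℝ) (x : Fin 3 → ℝ) : ℝ :=
  ∑ i, pd i (fun y => pd i f y) x

/-- Cross product on `ℝ³`. -/
def cross3 (u v : Fin 3 → ℝ) : Fin 3 → ℝ :=
  ![u 1 * v 2 - u 2 * v 1, u 2 * v 0 - u 0 * v 2, u 0 * v 1 - u 1 * v 0]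

/-- The incompressible viscous MHD equations with finite electrical conductivity:
(M1) `∇·v = 0`, (M2) momentum, (M3) `∇·H = 0`, (M4) induction. -/
def MHD (ρ ν μ₀ η : ℝ) (v H : ℝ → (Fin 3 → ℝ) → (Fin 3 → ℝ))
    (p : ℝ → (Fin 3 → ℝ) → ℝ) : Prop :=
  ∀ (t : ℝ) (x : Fin 3 → ℝ),
    vdiv (v t) x = 0 ∧
    (∀ i, deriv (fun s => v s x i) t
        + (∑ j, v t x j * pd j (fun y => v t y i) x)
        - μ₀ * cross3 (H t x) (vcurl (H t) x) i
        + (1 / ρ) * pd i (p t) x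
        = ν * slap (fun y => v t y i) x) ∧
    vdiv (H t) x = 0 ∧
    (∀ i, deriv (fun s => H s x i) t
        = vcurl (fun y => cross3 (v t y) (H t y)) x i
          + η * slap (fun y => H t y i) x)

/-!
For the linear fields `v = A x`, `H = B x` all derivatives are constant or linear, and the
equations become matrix identities. Incompressibility is `tr A = tr B = 0`. Since
`H × (∇ × H) = ∇(|H|²/2) - (H·∇)H = (BᵀB - B²) x = 2 BᵀB x` for skew `B`, the Lorentz force is
exactly balanced by the magnetic pressure `ρ μ₀ |B x|²`, and for symmetric `A` the remaining
term `(A' + A²) x` is the gradient of the hydrodynamic pressure. The induction equation reduces to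
`∇ × (A x × B x) = (tr B • A - tr A • B + [A, B]) x = 0`, i.e. to `[A, B] = 0`. This is why `M`
is chosen as `-(w wᵀ - |w|²/3 • 1) / (b₁₂ b₁₃ b₂₃)`, with `w = (-b₂₃, b₁₃, -b₁₂)` the axial vector
of `B` (`B x = w × x`).
-/

theorem hasDerivAt_mulVec_update {n : Type*} [Fintype n] [DecidableEq n]
    (A : Matrix n n ℝ) (x : n → ℝ) (j k : n) (s : ℝ) :
    HasDerivAt (fun r => (A *ᵥ Function.update x j r) k) (A k j) s := by
  have h := (Matrix.mulVecLin A).toContinuousLinearMap.hasFDerivAt.comp_hasDerivAt s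
    (hasDerivAt_update x j s)
  simpa [mulVec_single_one] using (hasDerivAt_pi.1 h) k

theorem hasDerivAt_dotProduct_mulVec_update {n : Type*} [Fintype n] [DecidableEq n]
    (A B : Matrix n n ℝ) (x : n → ℝ) (j : n) :
    HasDerivAt (fun s => (A *ᵥ Function.update x j s) ⬝ᵥ (B *ᵥ Function.update x j s))
      (((B *ᵥ x) ᵥ* A + (A *ᵥ x) ᵥ* B) j) (x j) := by
  refine (HasDerivAt.fun_sum (u := Finset.univ) fun k _ =>
    (hasDerivAt_mulVec_update A x j k (x j)).fun_mul
      (hasDerivAt_mulVec_update B x j k (x j))).congr_deriv ?_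
  simp [vecMul, dotProduct, Finset.sum_add_distrib, mul_comm]

theorem pd_mulVec (A : Matrix (Fin 3) (Fin 3) ℝ) (i j : Fin 3) (x : Fin 3 → ℝ) :
    pd j (fun y => (A *ᵥ y) i) x = A i j :=
  (hasDerivAt_mulVec_update A x j i (x j)).deriv

section LinearFields

variable (A B : Matrix (Fin 3) (Fin 3) ℝ) (x : Fin 3 → ℝ)

theorem vdiv_mulVec : vdiv (A *ᵥ ·) x = A.trace := by
  simp [vdiv, pd_mulVec, trace]

theorem slap_mulVec (i : Fin 3) : slap (fun y => (A *ᵥ y) i) x = 0 := by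
  simp only [slap, pd_mulVec]
  simp [pd]

theorem vcurl_mulVec :
    vcurl (A *ᵥ ·) x = ![A 2 1 - A 1 2, A 0 2 - A 2 0, A 1 0 - A 0 1] := by
  simp [vcurl, pd_mulVec]

theorem cross3_mulVec_vcurl_mulVec :
    cross3 (B *ᵥ x) (vcurl (B *ᵥ ·) x) = (Bᵀ * B - B * B) *ᵥ x := by
  rw [vcurl_mulVec]
  ext i
  fin_cases i <;>
    simp [cross3, mulVec, dotProduct, mul_apply, Fin.sum_univ_three] <;> ring

theorem vcurl_cross3_mulVec :
    vcurl (fun y => cross3 (A *ᵥ y) (B *ᵥ y)) x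
      = (B.trace • A - A.trace • B + A * B - B * A) *ᵥ x := by
  have hpd : ∀ i j k, pd k (fun y => (A *ᵥ y) i * (B *ᵥ y) j - (A *ᵥ y) j * (B *ᵥ y) i) x
      = A i k * (B *ᵥ x) j + (A *ᵥ x) i * B j k - (A j k * (B *ᵥ x) i + (A *ᵥ x) j * B i k) := by
    intro i j k
    unfold pd
    simpa using (((hasDerivAt_mulVec_update A x k i (x k)).fun_mul
      (hasDerivAt_mulVec_update B x k j (x k))).fun_sub
      ((hasDerivAt_mulVec_update A x k j (x k)).fun_mul
      (hasDerivAt_mulVec_update B x k i (x k)))).deriv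
  ext i
  fin_cases i <;>
    simp only [vcurl, cross3, Fin.zero_eta, Fin.mk_one, Fin.reduceFinMk, cons_val, hpd] <;>
    simp [mulVec, dotProduct, mul_apply, trace, Fin.sum_univ_three] <;> ring

end LinearFields

theorem hasDerivAt_mulVec_apply {n : Type*} [Fintype n] {A : ℝ → Matrix n n ℝ}
    {A' : Matrix n n ℝ} {t : ℝ} (hA : ∀ i j, HasDerivAt (fun s => A s i j) (A' i j) t)
    (x : n → ℝ) (i : n) :
    HasDerivAt (fun s => (A s *ᵥ x) i) ((A' *ᵥ x) i) t :=
  HasDerivAt.fun_sum fun j _ => (hA i j).mul_const (x j)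

theorem transpose_eq_of_hasDerivAt {n : Type*} {A : ℝ → Matrix n n ℝ} {A' : Matrix n n ℝ}
    {t : ℝ} (hA : ∀ i j, HasDerivAt (fun s => A s i j) (A' i j) t)
    (hsymm : ∀ s, (A s)ᵀ = A s) : A'ᵀ = A' := by
  ext i j
  have hji : (fun s => A s j i) = fun s => A s i j :=
    funext fun s => congrFun (congrFun (hsymm s) i) j
  exact (hji ▸ hA j i).unique (hA i j)

theorem momentum_residual_eq_zero {ρ : ℝ} (hρ : ρ ≠ 0) (μ₀ : ℝ)
    {A A' B : Matrix (Fin 3) (Fin 3) ℝ} (hA : Aᵀ = A) (hA' : A'ᵀ = A') (hB : Bᵀ = -B)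
    (x : Fin 3 → ℝ) (i : Fin 3) :
    (A' *ᵥ x) i + ∑ j, (A *ᵥ x) j * pd j (fun y => (A *ᵥ y) i) x
      - μ₀ * cross3 (B *ᵥ x) (vcurl (B *ᵥ ·) x) i
      + (1 / ρ) * pd i (fun y => -(ρ / 2) * (y ⬝ᵥ (A' + A * A) *ᵥ y)
          + ρ * μ₀ * (B *ᵥ y ⬝ᵥ B *ᵥ y)) x = 0 := by
  have hQ : (A' + A * A)ᵀ = A' + A * A := by
    rw [transpose_add, transpose_mul, hA, hA']
  have hp : pd i (fun y => -(ρ / 2) * (y ⬝ᵥ (A' + A * A) *ᵥ y)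
      + ρ * μ₀ * (B *ᵥ y ⬝ᵥ B *ᵥ y)) x
      = -ρ * ((A' + A * A) *ᵥ x) i - 2 * ρ * μ₀ * (B *ᵥ (B *ᵥ x)) i := by
    have hq := hasDerivAt_dotProduct_mulVec_update 1 (A' + A * A) x i
    have hb := hasDerivAt_dotProduct_mulVec_update B B x i
    simp only [one_mulVec] at hq
    refine ((hq.const_mul _).add (hb.const_mul _)).deriv.trans ?_
    rw [vecMul_one, ← mulVec_transpose, hQ, ← mulVec_transpose, hB]
    simp only [Pi.add_apply, neg_mulVec, Pi.neg_apply]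
    ring
  have hconv : ∑ j, (A *ᵥ x) j * pd j (fun y => (A *ᵥ y) i) x = (A *ᵥ (A *ᵥ x)) i := by
    simp only [pd_mulVec]
    exact Finset.sum_congr rfl fun j _ => mul_comm _ _
  rw [hp, hconv, cross3_mulVec_vcurl_mulVec, hB]
  simp only [add_mulVec, sub_mulVec, neg_mulVec, ← mulVec_mulVec,
    Pi.add_apply, Pi.sub_apply, Pi.neg_apply]
  field_simp
  ring

theorem MHD.of_mulVec {ρ : ℝ} (hρ : ρ ≠ 0) (ν μ₀ η : ℝ) {A A' : ℝ → Matrix (Fin 3) (Fin 3) ℝ}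
    {B : Matrix (Fin 3) (Fin 3) ℝ} (hA : ∀ t i j, HasDerivAt (fun s => A s i j) (A' t i j) t)
    (hsymm : ∀ t, (A t)ᵀ = A t) (htrace : ∀ t, (A t).trace = 0) (hB : Bᵀ = -B)
    (hcomm : ∀ t, A t * B = B * A t) :
    MHD ρ ν μ₀ η (fun t x => A t *ᵥ x) (fun _ x => B *ᵥ x)
      (fun t x => -(ρ / 2) * (x ⬝ᵥ (A' t + A t * A t) *ᵥ x) + ρ * μ₀ * (B *ᵥ x ⬝ᵥ B *ᵥ x)) := by
  have htraceB : B.trace = 0 := by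
    have h := trace_transpose B
    rw [hB, trace_neg] at h
    linarith
  intro t x
  refine ⟨vdiv_mulVec _ x ▸ htrace t, fun i => ?_, vdiv_mulVec B x ▸ htraceB, fun i => ?_⟩
  · rw [(hasDerivAt_mulVec_apply (hA t) x i).deriv, slap_mulVec, mul_zero]
    exact momentum_residual_eq_zero hρ μ₀ (hsymm t)
      (transpose_eq_of_hasDerivAt (hA t) hsymm) hB x i
  · rw [vcurl_cross3_mulVec, htrace, htraceB, hcomm, slap_mulVec]
    simp

/-- Proposition 2.2: linear solutions with skew-symmetric constant `B` and symmetric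
traceless `A(t) = g(t) • M`. -/
theorem stmt_1 (ρ ν μ₀ η : ℝ) (hρ : 0 < ρ) (b12 b13 b23 : ℝ)
    (hb : b12 * b13 * b23 ≠ 0)
    (g g' : ℝ → ℝ) (hg : ∀ t, HasDerivAt g (g' t) t) :
    let B : Matrix (Fin 3) (Fin 3) ℝ := !![0, b12, b13; -b12, 0, b23; -b13, -b23, 0]
    let M : Matrix (Fin 3) (Fin 3) ℝ :=
      !![(b12 ^ 2 + b13 ^ 2 - 2 * b23 ^ 2) / (3 * b12 * b13 * b23), 1 / b12, -(1 / b13);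
         1 / b12, (b12 ^ 2 - 2 * b13 ^ 2 + b23 ^ 2) / (3 * b12 * b13 * b23), 1 / b23;
         -(1 / b13), 1 / b23,
           -((b12 ^ 2 + b13 ^ 2 - 2 * b23 ^ 2) / (3 * b12 * b13 * b23))
             - (b12 ^ 2 - 2 * b13 ^ 2 + b23 ^ 2) / (3 * b12 * b13 * b23)]
    MHD ρ ν μ₀ η (fun t x => (g t • M).mulVec x) (fun _ x => B.mulVec x)
      (fun t x => -(ρ / 2) * (x ⬝ᵥ (g' t • M + (g t • M) * (g t • M)).mulVec x)
        + ρ * μ₀ * (B.mulVec x ⬝ᵥ B.mulVec x)) := by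
  intro B M
  have h12 : b12 ≠ 0 := left_ne_zero_of_mul (left_ne_zero_of_mul hb)
  have h13 : b13 ≠ 0 := right_ne_zero_of_mul (left_ne_zero_of_mul hb)
  have h23 : b23 ≠ 0 := right_ne_zero_of_mul hb
  have hM : Mᵀ = M := by
    ext i j; fin_cases i <;> fin_cases j <;> rfl
  have hMtrace : M.trace = 0 := by
    simp [M, trace_fin_three]
  have hB : Bᵀ = -B := by
    ext i j; fin_cases i <;> fin_cases j <;> simp [B]
  have hMB : M * B = B * M := by
    ext i j
    fin_cases i <;> fin_cases j <;>
      simp [M, B, mul_apply, Fin.sum_univ_three] <;> field_simp <;> ring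
  refine MHD.of_mulVec hρ.ne' ν μ₀ η (fun t i j => (hg t).mul_const (M i j))
    (fun t => by rw [transpose_smul, hM]) (fun t => by rw [trace_smul, hMtrace, smul_zero])
    hB (fun t => by rw [Matrix.smul_mul, Matrix.mul_smul, hMB])
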